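/- arXiv:2012.13130 — 2 statements merged into one kernel-verified Lean document; each statement's English description precedes it below -/
import Mathlib

section
/- Let χ < 0 and χ_1,...,χ_n < 0 be integers with χ = Σ_{j=1}^n χ_j - (n-1)m for a positive integer m. Then there exist rational numbers w_1,...,w_n with 0 < w_j < 1 and Σ w_j = 1 such that for each i = 1,...,n-1: (Σ_{j=1}^i w_j)χ - Σ_{j=1}^{i-1} χ_j + m(i-1) ≤ χ_i ≤ (Σ_{j=1}^i w_j)χ - Σ_{j=1}^{i-1} χ_j + mi. -/
/-!
Take `w` proportional to `a_j = m - χ_j` for `j < n` and to `a_n = -χ_n`. These are positive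
and, by the relation between `χ` and the `χ_j`, sum to `-χ`; so `w_j = a_j / (-χ)` is a
polarization. For `i < n` the partial sum `(∑_{j ≤ i} w_j) χ` equals
`∑_{j ≤ i} χ_j - i m`, which makes the upper inequality an equality and turns the lower one
into `χ_i - m ≤ χ_i`.
-/

open Finset

section Normalize

variable {ι K : Type*} [Fintype ι] [Field K]

lemma sum_div_sum_self {a : ι → K} (ha : ∑ k, a k ≠ 0) : ∑ i, a i / ∑ k, a k = 1 := by
  rw [← sum_div, div_self ha]

lemma div_sum_pos_and_lt_one [Nontrivial ι] [LinearOrder K] [IsStrictOrderedRing K] {a : ι → K}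
    (ha : ∀ i, 0 < a i) (i : ι) : 0 < a i / ∑ k, a k ∧ a i / ∑ k, a k < 1 := by
  obtain ⟨j, hji⟩ := exists_ne i
  have hsum : 0 < ∑ k, a k := sum_pos (fun k _ => ha k) univ_nonempty
  exact ⟨div_pos (ha i) hsum, (div_lt_one hsum).2 <|
    single_lt_sum hji (mem_univ i) (mem_univ j) (ha j) fun k _ _ => (ha k).le⟩

end Normalize

section PolarizationWeight

variable {K : Type*} [Field K] {k : ℕ} (m : K) (c : Fin (k + 1) → K)

def polarizationWeight (j : Fin (k + 1)) : K :=
  if j = Fin.last k then -c j else m - c j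

lemma polarizationWeight_pos [LinearOrder K] [IsStrictOrderedRing K] (hm : 0 ≤ m)
    (hc : ∀ j, c j < 0) (j : Fin (k + 1)) : 0 < polarizationWeight m c j := by
  have := hc j
  unfold polarizationWeight
  split_ifs <;> linarith

lemma sum_polarizationWeight : ∑ j, polarizationWeight m c j = k * m - ∑ j, c j := by
  simp only [polarizationWeight, Fin.sum_univ_castSucc (f := c), Fin.sum_univ_castSucc,
    Fin.castSucc_ne_last, if_false, if_true, sum_sub_distrib, sum_const, card_univ,
    Fintype.card_fin, nsmul_eq_mul]
  ring

lemma sum_Iic_polarizationWeight {i : Fin (k + 1)} (hi : i < Fin.last k) :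
    ∑ j ∈ Iic i, polarizationWeight m c j = (i + 1) * m - ∑ j ∈ Iic i, c j := by
  have hweight : ∀ j ∈ Iic i, polarizationWeight m c j = m - c j := fun j hj =>
    if_neg ((mem_Iic.1 hj).trans_lt hi).ne
  rw [sum_congr rfl hweight, sum_sub_distrib, sum_const, Fin.card_Iic, nsmul_eq_mul]
  push_cast
  ring

end PolarizationWeight

theorem exists_polarization_general
    (n : ℕ) (hn : 2 ≤ n) (m : ℕ)
    (chi : ℤ)
    (chiJ : Fin n → ℤ) (hchiJ : ∀ j, chiJ j < 0)
    (hrel : chi = (∑ j, chiJ j) - ((n : ℤ) - 1) * m) :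
    ∃ w : Fin n → ℚ,
      (∀ j, 0 < w j ∧ w j < 1) ∧ (∑ j, w j) = 1 ∧
      ∀ i : Fin n, (i : ℕ) < n - 1 →
        ((∑ j ∈ Finset.Iic i, w j) * (chi : ℚ) - (∑ j ∈ Finset.Iio i, (chiJ j : ℚ))
            + (m : ℚ) * ((i : ℕ) : ℚ) ≤ (chiJ i : ℚ)) ∧
        ((chiJ i : ℚ) ≤ (∑ j ∈ Finset.Iic i, w j) * (chi : ℚ)
            - (∑ j ∈ Finset.Iio i, (chiJ j : ℚ)) + (m : ℚ) * (((i : ℕ) : ℚ) + 1)) := by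
  obtain ⟨k, rfl⟩ : ∃ k, n = k + 1 := ⟨n - 1, by omega⟩
  have : Nontrivial (Fin (k + 1)) := Fin.nontrivial_iff_two_le.2 hn
  set a := polarizationWeight (m : ℚ) fun j => (chiJ j : ℚ)
  have ha_pos : ∀ j, 0 < a j :=
    polarizationWeight_pos _ _ m.cast_nonneg fun j => Int.cast_lt_zero.2 (hchiJ j)
  have ha_sum : ∑ j, a j = -chi := by
    rw [sum_polarizationWeight, hrel]
    push_cast
    ring
  have hchi : (chi : ℚ) < 0 := by linarith [sum_pos (fun j _ => ha_pos j) univ_nonempty]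
  refine ⟨fun j => a j / ∑ k, a k, div_sum_pos_and_lt_one ha_pos,
    sum_div_sum_self (by linarith), fun i hi => ?_⟩
  have hW : (∑ j ∈ Iic i, a j / ∑ k, a k) * chi
      = ∑ j ∈ Iio i, (chiJ j : ℚ) + chiJ i - m * ((i : ℕ) + 1) := by
    rw [← sum_div, ha_sum, sum_Iic_polarizationWeight _ _ (Fin.lt_def.2 (by simpa using hi)),
      ← sum_Iio_add_eq_sum_Iic]
    field_simp [hchi.ne]
    ring
  rw [hW]
  constructor <;> linarith [(Nat.cast_nonneg m : (0 : ℚ) ≤ m)]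

theorem exists_polarization
    (n : ℕ) (hn : 2 ≤ n) (m : ℕ) (hm : 0 < m)
    (chi : ℤ) (hchi : chi < 0)
    (chiJ : Fin n → ℤ) (hchiJ : ∀ j, chiJ j < 0)
    (hrel : chi = (∑ j, chiJ j) - ((n : ℤ) - 1) * m) :
    ∃ w : Fin n → ℚ,
      (∀ j, 0 < w j ∧ w j < 1) ∧ (∑ j, w j) = 1 ∧
      ∀ i : Fin n, (i : ℕ) < n - 1 →
        ((∑ j ∈ Finset.Iic i, w j) * (chi : ℚ) - (∑ j ∈ Finset.Iio i, (chiJ j : ℚ))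
            + (m : ℚ) * ((i : ℕ) : ℚ) ≤ (chiJ i : ℚ)) ∧
        ((chiJ i : ℚ) ≤ (∑ j ∈ Finset.Iic i, w j) * (chi : ℚ)
            - (∑ j ∈ Finset.Iio i, (chiJ j : ℚ)) + (m : ℚ) * (((i : ℕ) : ℚ) + 1)) :=
  exists_polarization_general n hn m chi chiJ hchiJ hrel
end

section
/- Let C be a chain-like curve, V a nonzero finite-dimensional complex vector space, and M a subbundle of V ⊗ O_C of rank m with locally free quotient, χ(M) < 0, and each restriction M|_{C_j} semistable. Then there exists a polarization w such that M is w-semistable; moreover if some M|_{C_j} is stable then M is w-stable. -/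
/-!
STATEMENT 9: Let C be a chain-like curve, V a nonzero finite-dimensional complex
vector space, and M a subbundle of V ⊗ O_C of rank m with locally free quotient,
χ(M) < 0, and each restriction M|_{C_j} semistable.  Then there is a polarization
w such that M is w-semistable; if moreover some M|_{C_j} is stable, then M is
w-stable.

M and its subsheaves are recorded by their numerical invariants (Euler
characteristic and multirank); M has multirank (m,…,m).  Since M|_{C_j} is a
subbundle of the trivial bundle V ⊗ O_{C_j} on the smooth component C_j (the
quotient being locally free), its degree deg_j is ≤ 0, so
χ(M|_{C_j}) = deg_j + m(1 - g_j) and χ(M) = ∑_j χ(M|_{C_j}) - (n-1)m.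
Semistability and stability of the restrictions are abstract predicates which
enter through Teixidor i Bigas's criterion (hypotheses htx, htxs): if every
restriction is semistable and the polarization inequalities hold, then M is
w-semistable, and w-stable if moreover some restriction is stable.
-/
/-- A polarization on a (chain-like) curve with `n` components: a tuple of
rationals `w_j` with `0 < w_j < 1` summing to `1`. -/
def IsPolarization {n : ℕ} (w : Fin n → ℚ) : Prop :=
  (∀ j, 0 < w j ∧ w j < 1) ∧ (∑ j, w j) = 1

/-- The `w`-slope `μ_w = χ / ∑ w_j r_j` of a pure dimension-one sheaf with Euler
characteristic `chi` and multirank `r`. -/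
def wSlope {n : ℕ} (w : Fin n → ℚ) (chi : ℤ) (r : Fin n → ℕ) : ℚ :=
  (chi : ℚ) / ∑ j, w j * (r j : ℚ)

/-- `w`-semistability of a sheaf with invariants `(chi, rk)`, phrased in terms of
the collection `subs` of numerical invariants `(χ(F), multirank of F)` of its
proper nonzero subsheaves: `μ_w(F) ≤ μ_w(M)` for all such `F`. -/
def WSemistable {n : ℕ} (w : Fin n → ℚ) (chi : ℤ) (rk : Fin n → ℕ)
    (subs : Set (ℤ × (Fin n → ℕ))) : Prop :=
  ∀ F ∈ subs, wSlope w F.1 F.2 ≤ wSlope w chi rk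

/-- `w`-stability: `μ_w(F) < μ_w(M)` for all proper nonzero subsheaves. -/
def WStable {n : ℕ} (w : Fin n → ℚ) (chi : ℤ) (rk : Fin n → ℕ)
    (subs : Set (ℤ × (Fin n → ℕ))) : Prop :=
  ∀ F ∈ subs, wSlope w F.1 F.2 < wSlope w chi rk

/-- The polarization inequalities of Teixidor i Bigas for a bundle of rank `m`
with Euler characteristic `chi` whose restrictions to the components have Euler
characteristics `chiR j` (indices `0`-based: `i : Fin n` with `(i : ℕ) < n - 1`
corresponds to the `1`-based index `i + 1 ∈ {1,…,n-1}`):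
`(∑_{j=1}^i w_j)χ - ∑_{j=1}^{i-1}χ_j + m(i-1) ≤ χ_i ≤ (∑_{j=1}^i w_j)χ - ∑_{j=1}^{i-1}χ_j + mi`. -/
def BigasIneq {n : ℕ} (w : Fin n → ℚ) (m : ℕ) (chi : ℤ) (chiR : Fin n → ℤ) : Prop :=
  ∀ i : Fin n, (i : ℕ) < n - 1 →
    ((∑ j ∈ Finset.Iic i, w j) * (chi : ℚ) - (∑ j ∈ Finset.Iio i, (chiR j : ℚ))
        + (m : ℚ) * ((i : ℕ) : ℚ) ≤ (chiR i : ℚ)) ∧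
    ((chiR i : ℚ) ≤ (∑ j ∈ Finset.Iic i, w j) * (chi : ℚ)
        - (∑ j ∈ Finset.Iio i, (chiR j : ℚ)) + (m : ℚ) * (((i : ℕ) : ℚ) + 1))

/-!
Let `ν_j` be the number of nodes on `C_j` and put `w_j = (χ_j - ν_j m / 2) / χ`.  Since
`∑ ν_j = 2(n - 1)`, the relation `χ = ∑ χ_j - (n - 1) m` gives `∑ w_j = 1`, and since
`∑_{j ≤ i} ν_j = 2i + 1` for `i < n - 1`, the partial sums satisfy
`(∑_{j ≤ i} w_j) χ = ∑_{j ≤ i} χ_j - m (i + 1/2)`: this puts `χ_i` exactly at the midpoint of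
the interval allowed by Teixidor i Bigas's inequalities.  The weights are positive because
`χ < 0` and `χ_j = deg_j + m(1 - g_j) ≤ -m`, so the criterion applies.
-/

theorem Fin.sum_ite_val_eq {M : Type*} [AddCommMonoid M] {n : ℕ} (s : Finset (Fin n))
    (k : ℕ) (hk : k < n) (a : M) :
    ∑ j ∈ s, (if (j : ℕ) = k then a else 0) = if (⟨k, hk⟩ : Fin n) ∈ s then a else 0 := by
  simp_rw [show ∀ j : Fin n, ((j : ℕ) = k ↔ j = ⟨k, hk⟩) from fun j => by simp [Fin.ext_iff],
    Finset.sum_ite_eq']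

/-- The number of nodes of a chain of `n` curves lying on its `j`-th component. -/
def chainNodeCount (n : ℕ) (j : Fin n) : ℚ :=
  2 - (if (j : ℕ) = 0 then 1 else 0) - (if (j : ℕ) = n - 1 then 1 else 0)

theorem one_le_chainNodeCount {n : ℕ} (hn : 2 ≤ n) (j : Fin n) : 1 ≤ chainNodeCount n j := by
  unfold chainNodeCount
  split_ifs <;> first | omega | norm_num

theorem sum_chainNodeCount {n : ℕ} (hn : 1 ≤ n) :
    ∑ j, chainNodeCount n j = 2 * ((n : ℚ) - 1) := by
  simp only [chainNodeCount, Finset.sum_sub_distrib]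
  rw [Fin.sum_ite_val_eq _ 0 hn, Fin.sum_ite_val_eq _ (n - 1) (by omega)]
  simp only [Finset.sum_const, Finset.card_univ, Fintype.card_fin, nsmul_eq_mul,
    Finset.mem_univ, ↓reduceIte]
  ring

theorem sum_Iic_chainNodeCount {n : ℕ} (i : Fin n) (hi : (i : ℕ) < n - 1) :
    ∑ j ∈ Finset.Iic i, chainNodeCount n j = 2 * (i : ℚ) + 1 := by
  simp only [chainNodeCount, Finset.sum_sub_distrib]
  rw [Fin.sum_ite_val_eq _ 0 (by omega), Fin.sum_ite_val_eq _ (n - 1) (by omega),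
    if_pos (by simp [Fin.le_def]), if_neg (by simp [Fin.le_def]; omega)]
  simp only [Finset.sum_const, Fin.card_Iic, nsmul_eq_mul, Nat.cast_add, Nat.cast_one, sub_zero]
  ring

theorem bigasIneq_of_midpoint {n : ℕ} (w : Fin n → ℚ) (m : ℕ) (chi : ℤ) (chiR : Fin n → ℤ)
    (hmid : ∀ i : Fin n, (i : ℕ) < n - 1 →
      (∑ j ∈ Finset.Iic i, w j) * chi = ∑ j ∈ Finset.Iic i, (chiR j : ℚ) - m / 2 * (2 * i + 1)) :
    BigasIneq w m chi chiR := by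
  intro i hi
  rw [hmid i hi, ← Finset.Iio_insert, Finset.sum_insert Finset.notMem_Iio_self]
  have hm : (0 : ℚ) ≤ m := m.cast_nonneg
  constructor <;> linarith

/-- Weights obtained by splitting the correction `-(n - 1) m` in
`χ(M) = ∑ χ(M|_{C_j}) - (n - 1) m` evenly between the two components meeting at each node. -/
def chainWeight {n : ℕ} (m : ℕ) (chi : ℤ) (chiR : Fin n → ℤ) (j : Fin n) : ℚ :=
  ((chiR j : ℚ) - m / 2 * chainNodeCount n j) / chi

section chainWeight

variable {n : ℕ} {m : ℕ} {chi : ℤ} {chiR : Fin n → ℤ}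

theorem sum_chainWeight (hn : 1 ≤ n) (hchi : chi ≠ 0)
    (hrel : chi = (∑ j, chiR j) - ((n : ℤ) - 1) * (m : ℤ)) :
    ∑ j, chainWeight m chi chiR j = 1 := by
  unfold chainWeight
  rw [← Finset.sum_div, Finset.sum_sub_distrib, ← Finset.mul_sum, sum_chainNodeCount hn,
    div_eq_one_iff_eq (by exact_mod_cast hchi), hrel]
  push_cast
  ring

theorem sum_Iic_chainWeight_mul (hchi : chi ≠ 0) (i : Fin n) (hi : (i : ℕ) < n - 1) :
    (∑ j ∈ Finset.Iic i, chainWeight m chi chiR j) * chi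
      = ∑ j ∈ Finset.Iic i, (chiR j : ℚ) - m / 2 * (2 * i + 1) := by
  unfold chainWeight
  rw [← Finset.sum_div, div_mul_cancel₀ _ (by exact_mod_cast hchi), Finset.sum_sub_distrib,
    ← Finset.mul_sum, sum_Iic_chainNodeCount i hi]

theorem chainWeight_pos (hn : 2 ≤ n) (hchi : chi < 0) (hchiR : ∀ j, 2 * chiR j < m)
    (j : Fin n) : 0 < chainWeight m chi chiR j := by
  refine div_pos_of_neg_of_neg ?_ (by exact_mod_cast hchi)
  have hm : (0 : ℚ) ≤ m / 2 := by positivity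
  have hj : 2 * (chiR j : ℚ) < m := by exact_mod_cast hchiR j
  nlinarith [one_le_chainNodeCount hn j]

end chainWeight

theorem isPolarization_of_pos {n : ℕ} (hn : 1 < n) (w : Fin n → ℚ) (hpos : ∀ j, 0 < w j)
    (hsum : ∑ j, w j = 1) : IsPolarization w := by
  refine ⟨fun j => ⟨hpos j, ?_⟩, hsum⟩
  obtain ⟨i, hij⟩ : ∃ i : Fin n, i ≠ j := Fintype.exists_ne_of_one_lt_card (by simpa) j
  calc w j < ∑ k, w k :=
        Finset.single_lt_sum hij (Finset.mem_univ j) (Finset.mem_univ i) (hpos i)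
          fun k _ _ => (hpos k).le
    _ = 1 := hsum

theorem subbundle_of_trivial_bundle_w_semistable
    (n : ℕ) (hn : 2 ≤ n)
    (g : Fin n → ℤ) (hg : ∀ j, 2 ≤ g j)
    (m : ℕ) (hm : 0 < m)                                  -- rank of M
    (chi : ℤ) (hchi : chi < 0)                            -- χ(M) < 0
    (degJ : Fin n → ℤ) (hdegJ : ∀ j, degJ j ≤ 0)          -- deg of M|_{C_j} ⊆ V ⊗ O_{C_j}
    (chiJ : Fin n → ℤ)                                    -- χ(M|_{C_j})
    (hchiJ : ∀ j, chiJ j = degJ j + (m : ℤ) * (1 - g j))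
    (hrel : chi = (∑ j, chiJ j) - ((n : ℤ) - 1) * (m : ℤ))
    (subs : Set (ℤ × (Fin n → ℕ)))                        -- proper nonzero subsheaves of M
    (semistableJ stableJ : Fin n → Prop)                  -- (semi)stability of M|_{C_j}
    (hss : ∀ j, semistableJ j)                            -- each M|_{C_j} is semistable
    -- Teixidor i Bigas's criterion (sufficiency):
    (htx : ∀ w : Fin n → ℚ, IsPolarization w → (∀ j, semistableJ j) →
        BigasIneq w m chi chiJ → WSemistable w chi (fun _ => m) subs)
    (htxs : ∀ w : Fin n → ℚ, IsPolarization w → (∀ j, semistableJ j) →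
        (∃ j, stableJ j) → BigasIneq w m chi chiJ → WStable w chi (fun _ => m) subs) :
    ∃ w : Fin n → ℚ, IsPolarization w ∧ WSemistable w chi (fun _ => m) subs ∧
      ((∃ j, stableJ j) → WStable w chi (fun _ => m) subs) := by
  have hchiJ_lt : ∀ j, 2 * chiJ j < m := fun j => by
    nlinarith [hchiJ j, hdegJ j, hg j]
  set w := chainWeight m chi chiJ
  have hpol : IsPolarization w := isPolarization_of_pos hn w (chainWeight_pos hn hchi hchiJ_lt)
    (sum_chainWeight (by omega) hchi.ne hrel)
  have hbigas : BigasIneq w m chi chiJ :=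
    bigasIneq_of_midpoint w m chi chiJ fun i hi => sum_Iic_chainWeight_mul hchi.ne i hi
  exact ⟨w, hpol, htx w hpol hss hbigas, fun hstable => htxs w hpol hss hstable hbigas⟩
end
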